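/- Let Φ_X ∈ R^{n×s}, Φ_Y ∈ R^{m×s} and η > 0. Set Λ = (1/n) Φ_Xᵀ Φ_X − (η/m) Φ_Yᵀ Φ_Y. Then Λ shares the same nonzero eigenvalues with the (n+m)×(n+m) block matrix K = [[K_XX, √η K_XY], [−√η K_XYᵀ, −η K_YY]], where K_XX = (1/n) Φ_X Φ_Xᵀ, K_YY = (1/m) Φ_Y Φ_Yᵀ, and K_XY = (1/√(nm)) Φ_X Φ_Yᵀ. -/

import Mathlib

/-!
With `a = 1/√n` and `b = √η/√m`, put `A = [a Φ_X; -b Φ_Y]` and `B = [a Φ_Xᵀ, b Φ_Yᵀ]`; then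
`Λ = B A` and `K = A B`. For `μ ≠ 0`, `v ↦ A v` maps `μ`-eigenvectors of `B A` to
`μ`-eigenvectors of `A B` (nonzero since `B (A v) = μ v`), and symmetrically.
-/

open Matrix

namespace Matrix

variable {α β ι κ R : Type*} [CommRing R]

theorem exists_eigenvector_mul_of_swap [Fintype α] [Fintype β] [NoZeroDivisors R]
    (A : Matrix α β R) (B : Matrix β α R) {μ : R} (hμ : μ ≠ 0)
    (h : ∃ v : β → R, v ≠ 0 ∧ (B * A) *ᵥ v = μ • v) :
    ∃ w : α → R, w ≠ 0 ∧ (A * B) *ᵥ w = μ • w := by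
  obtain ⟨v, hv, hBA⟩ := h
  refine ⟨A *ᵥ v, fun hAv => hv ?_, ?_⟩
  · have : μ • v = 0 := by rw [← hBA, ← mulVec_mulVec, hAv, mulVec_zero]
    exact (smul_eq_zero.mp this).resolve_left hμ
  · rw [mulVec_mulVec, Matrix.mul_assoc, ← mulVec_mulVec, hBA, mulVec_smul]

theorem exists_eigenvector_mul_comm_iff [Fintype α] [Fintype β] [NoZeroDivisors R]
    (A : Matrix α β R) (B : Matrix β α R) {μ : R} (hμ : μ ≠ 0) :
    (∃ v : β → R, v ≠ 0 ∧ (B * A) *ᵥ v = μ • v) ↔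
      ∃ w : α → R, w ≠ 0 ∧ (A * B) *ᵥ w = μ • w :=
  ⟨exists_eigenvector_mul_of_swap A B hμ, exists_eigenvector_mul_of_swap B A hμ⟩

theorem fromCols_smul_transpose_mul_fromRows_smul [Fintype ι] [Fintype κ]
    (X : Matrix ι α R) (Y : Matrix κ α R) (a b : R) :
    fromCols (a • Xᵀ) (b • Yᵀ) * fromRows (a • X) (-b • Y) =
      (a * a) • (Xᵀ * X) - (b * b) • (Yᵀ * Y) := by
  rw [fromCols_mul_fromRows, sub_eq_add_neg]
  simp only [Matrix.smul_mul, Matrix.mul_smul, smul_smul, neg_smul, Matrix.mul_neg]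

theorem fromRows_smul_mul_fromCols_smul_transpose [Fintype α]
    (X : Matrix ι α R) (Y : Matrix κ α R) (a b : R) :
    fromRows (a • X) (-b • Y) * fromCols (a • Xᵀ) (b • Yᵀ) =
      fromBlocks ((a * a) • (X * Xᵀ)) ((a * b) • (X * Yᵀ)) (-(a * b) • (X * Yᵀ)ᵀ)
        (-(b * b) • (Y * Yᵀ)) := by
  simp only [fromRows_mul_fromCols, Matrix.smul_mul, Matrix.mul_smul, smul_smul,
    transpose_mul, transpose_transpose, mul_neg, mul_comm b a]

end Matrix

theorem stmt6_general {n m s : ℕ}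
    (ΦX : Matrix (Fin n) (Fin s) ℝ) (ΦY : Matrix (Fin m) (Fin s) ℝ)
    (η : ℝ) (hη : 0 < η) :
    let Λ : Matrix (Fin s) (Fin s) ℝ :=
      ((n : ℝ)⁻¹) • (ΦXᵀ * ΦX) - (η / m) • (ΦYᵀ * ΦY)
    let KXX : Matrix (Fin n) (Fin n) ℝ := ((n : ℝ)⁻¹) • (ΦX * ΦXᵀ)
    let KYY : Matrix (Fin m) (Fin m) ℝ := ((m : ℝ)⁻¹) • (ΦY * ΦYᵀ)
    let KXY : Matrix (Fin n) (Fin m) ℝ := ((Real.sqrt ((n : ℝ) * m))⁻¹) • (ΦX * ΦYᵀ)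
    let K : Matrix (Fin n ⊕ Fin m) (Fin n ⊕ Fin m) ℝ :=
      Matrix.fromBlocks KXX (Real.sqrt η • KXY) (-(Real.sqrt η) • KXYᵀ) (-η • KYY)
    ∀ μ : ℝ, μ ≠ 0 →
      ((∃ v : Fin s → ℝ, v ≠ 0 ∧ Λ *ᵥ v = μ • v) ↔
       (∃ w : Fin n ⊕ Fin m → ℝ, w ≠ 0 ∧ K *ᵥ w = μ • w)) := by
  intro Λ KXX KYY KXY K μ hμ
  set a := (Real.sqrt n)⁻¹
  set b := Real.sqrt η / Real.sqrt m
  have haa : a * a = (n : ℝ)⁻¹ := by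
    rw [← mul_inv, Real.mul_self_sqrt n.cast_nonneg]
  have hbb : b * b = η / m := by
    rw [div_mul_div_comm, Real.mul_self_sqrt hη.le, Real.mul_self_sqrt m.cast_nonneg]
  have hab : a * b = Real.sqrt η * (Real.sqrt ((n : ℝ) * m))⁻¹ := by
    rw [Real.sqrt_mul n.cast_nonneg, mul_inv]
    ring
  have hΛ : Λ = fromCols (a • ΦXᵀ) (b • ΦYᵀ) * fromRows (a • ΦX) (-b • ΦY) := by
    rw [fromCols_smul_transpose_mul_fromRows_smul, haa, hbb]
  have hK : K = fromRows (a • ΦX) (-b • ΦY) * fromCols (a • ΦXᵀ) (b • ΦYᵀ) := by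
    rw [fromRows_smul_mul_fromCols_smul_transpose, haa, hab, hbb]
    simp only [K, KXX, KXY, KYY, transpose_smul, smul_smul, neg_mul, div_eq_mul_inv]
  rw [hΛ, hK]
  exact exists_eigenvector_mul_comm_iff _ _ hμ

/-- The differential kernel covariance matrix Λ = (1/n)ΦXᵀΦX − (η/m)ΦYᵀΦY shares
nonzero eigenvalues with the η-differential kernel block matrix. -/
theorem stmt6 {n m s : ℕ} (hn : 0 < n) (hm : 0 < m)
    (ΦX : Matrix (Fin n) (Fin s) ℝ) (ΦY : Matrix (Fin m) (Fin s) ℝ)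
    (η : ℝ) (hη : 0 < η) :
    let Λ : Matrix (Fin s) (Fin s) ℝ :=
      ((n : ℝ)⁻¹) • (ΦXᵀ * ΦX) - (η / m) • (ΦYᵀ * ΦY)
    let KXX : Matrix (Fin n) (Fin n) ℝ := ((n : ℝ)⁻¹) • (ΦX * ΦXᵀ)
    let KYY : Matrix (Fin m) (Fin m) ℝ := ((m : ℝ)⁻¹) • (ΦY * ΦYᵀ)
    let KXY : Matrix (Fin n) (Fin m) ℝ := ((Real.sqrt ((n : ℝ) * m))⁻¹) • (ΦX * ΦYᵀ)
    let K : Matrix (Fin n ⊕ Fin m) (Fin n ⊕ Fin m) ℝ :=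
      Matrix.fromBlocks KXX (Real.sqrt η • KXY) (-(Real.sqrt η) • KXYᵀ) (-η • KYY)
    ∀ μ : ℝ, μ ≠ 0 →
      ((∃ v : Fin s → ℝ, v ≠ 0 ∧ Λ *ᵥ v = μ • v) ↔
       (∃ w : Fin n ⊕ Fin m → ℝ, w ≠ 0 ∧ K *ᵥ w = μ • w)) :=
  stmt6_general ΦX ΦY η hη
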